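/- Let H(x,y) = y²/2 + x²/2 + x⁴/4 and let k be a natural number. Then xᵏ y² dx = −(2/(k+1))·xᵏ⁺¹ dH + d( (2H/(k+1))·xᵏ⁺¹ − (1/(k+3))·xᵏ⁺³ − (1/(2(k+5)))·xᵏ⁺⁵ ) as polynomial 1-forms on ℝ². -/

import Mathlib

/-!
Two facts make the identity work. By the Leibniz rule,
`d(H xᵏ⁺¹) = xᵏ⁺¹ dH + (k+1) H xᵏ dx`, so `−(2/(k+1)) xᵏ⁺¹ dH + d(2H xᵏ⁺¹/(k+1)) = 2H xᵏ dx`,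
and `2H xᵏ = xᵏ y² + xᵏ⁺² + xᵏ⁺⁴/2`. The two remaining terms of the primitive are chosen so
that their differentials cancel `(xᵏ⁺² + xᵏ⁺⁴/2) dx`.
-/

/-- partial derivative in the first variable -/
noncomputable def pdx (F : ℝ → ℝ → ℝ) (x y : ℝ) : ℝ := deriv (fun t => F t y) x

/-- partial derivative in the second variable -/
noncomputable def pdy (F : ℝ → ℝ → ℝ) (x y : ℝ) : ℝ := deriv (fun t => F x t) y

noncomputable def H (x y : ℝ) : ℝ := y^2/2 + x^2/2 + x^4/4

lemma hasDerivAt_pow_succ (n : ℕ) (x : ℝ) :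
    HasDerivAt (fun t : ℝ => t ^ (n + 1)) (((n : ℝ) + 1) * x ^ n) x := by
  simpa using hasDerivAt_pow (n + 1) x

lemma hasDerivAt_H_fst (x y : ℝ) : HasDerivAt (fun t => H t y) (x + x ^ 3) x := by
  have h2 : HasDerivAt (fun t : ℝ => t ^ 2 / 2) x x := by
    simpa using (hasDerivAt_pow 2 x).div_const 2
  have h4 : HasDerivAt (fun t : ℝ => t ^ 4 / 4) (x ^ 3) x := by
    simpa using (hasDerivAt_pow 4 x).div_const 4
  exact (h2.const_add (y ^ 2 / 2)).add h4

lemma hasDerivAt_H_snd (x y : ℝ) : HasDerivAt (fun t => H x t) y y := by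
  simpa [H, add_assoc] using ((hasDerivAt_pow 2 y).div_const 2).add_const (x ^ 2 / 2 + x ^ 4 / 4)

lemma pdx_H (x y : ℝ) : pdx H x y = x + x ^ 3 := (hasDerivAt_H_fst x y).deriv

lemma pdy_H (x y : ℝ) : pdy H x y = y := (hasDerivAt_H_snd x y).deriv

-- Reducible, so that `rw` finds it inside the lambda of `decomposition_i8`.
noncomputable abbrev exactPrimitive (k : ℕ) (x y : ℝ) : ℝ :=
  2 * H x y / ((k : ℝ) + 1) * x ^ (k + 1) - 1 / ((k : ℝ) + 3) * x ^ (k + 3)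
    - 1 / (2 * ((k : ℝ) + 5)) * x ^ (k + 5)

lemma pdx_exactPrimitive (k : ℕ) (x y : ℝ) :
    pdx (exactPrimitive k) x y = 2 * (x + x ^ 3) / ((k : ℝ) + 1) * x ^ (k + 1) + 2 * H x y * x ^ k
      - x ^ (k + 2) - x ^ (k + 4) / 2 := by
  have hprod := (((hasDerivAt_H_fst x y).const_mul 2).div_const ((k : ℝ) + 1)).mul
    (hasDerivAt_pow_succ k x)
  have h3 := (hasDerivAt_pow_succ (k + 2) x).const_mul (1 / ((k : ℝ) + 3))
  have h5 := (hasDerivAt_pow_succ (k + 4) x).const_mul (1 / (2 * ((k : ℝ) + 5)))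
  refine ((hprod.sub h3).sub h5).deriv.trans ?_
  push_cast
  field_simp
  ring

lemma pdy_exactPrimitive (k : ℕ) (x y : ℝ) :
    pdy (exactPrimitive k) x y = 2 * y / ((k : ℝ) + 1) * x ^ (k + 1) :=
  (((((hasDerivAt_H_snd x y).const_mul 2).div_const ((k : ℝ) + 1)).mul_const
    (x ^ (k + 1))).sub_const (1 / ((k : ℝ) + 3) * x ^ (k + 3))
    |>.sub_const (1 / (2 * ((k : ℝ) + 5)) * x ^ (k + 5))).deriv.trans (by ring)

/-- (i8):  xᵏy² dx = −(2/(k+1))·xᵏ⁺¹·dH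
    + d((2H/(k+1))·xᵏ⁺¹ − (1/(k+3))·xᵏ⁺³ − (1/(2(k+5)))·xᵏ⁺⁵) -/
theorem decomposition_i8 (k : ℕ) : ∀ x y : ℝ,
    x^k * y^2 = - (2/((k : ℝ)+1)) * x^(k+1) * pdx H x y
      + pdx (fun x y => (2 * H x y/((k : ℝ)+1)) * x^(k+1)
          - (1/((k : ℝ)+3)) * x^(k+3) - (1/(2*((k : ℝ)+5))) * x^(k+5)) x y
  ∧ (0 : ℝ) = - (2/((k : ℝ)+1)) * x^(k+1) * pdy H x y
      + pdy (fun x y => (2 * H x y/((k : ℝ)+1)) * x^(k+1)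
          - (1/((k : ℝ)+3)) * x^(k+3) - (1/(2*((k : ℝ)+5))) * x^(k+5)) x y := by
  intro x y
  have hk : (k : ℝ) + 1 ≠ 0 := by positivity
  rw [pdx_H, pdy_H, pdx_exactPrimitive, pdy_exactPrimitive, H]
  constructor <;> field_simp <;> ring
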